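/- A directed graph G has a consistent weight function assigning negative weights to exactly m - k edges (and positive weights to the other k edges, for suitably chosen magnitudes) if and only if there exists a set of k edges whose removal makes G acyclic. -/

import Mathlib

/-!
A cycle made of negative edges has negative weight, so the negative edges of a consistent
weighting form an acyclic graph and the remaining `k` edges are a feedback arc set.
Conversely, if `E \ F` is acyclic, the number of vertices reachable from `a` in `E \ F` is a
potential `p` that strictly decreases along `E \ F`. Any weighting with `w a b ≥ p b - p a`
on every edge is consistent, because the potential differences telescope to `0` around a
cycle; this leaves room to make the edges outside `F` negative and those in `F` positive.
-/

/-- Weight of a path given as a list of vertices: sum of weights of consecutive pairs. -/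
def pathWeight {V : Type*} (w : V → V → ℝ) (l : List V) : ℝ :=
  ((l.zip l.tail).map fun p => w p.1 p.2).sum

/-- `l` is a directed path (walk) from `u` to `v` in the graph with edge relation `E`. -/
def IsUVPath {V : Type*} (E : V → V → Prop) (u v : V) (l : List V) : Prop :=
  l ≠ [] ∧ l.Chain' E ∧ l.head? = some u ∧ l.getLast? = some v

/-- `l` is a directed cycle (closed walk): consecutive pairs are edges and it starts
and ends at the same vertex, traversing at least one edge. -/
def IsCycle {V : Type*} (E : V → V → Prop) (l : List V) : Prop :=
  2 ≤ l.length ∧ l.Chain' E ∧ l.head? = l.getLast?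

/-- `w` is consistent with the graph `E`: no directed cycle has negative total weight. -/
def Consistent {V : Type*} (E : V → V → Prop) (w : V → V → ℝ) : Prop :=
  ∀ l, IsCycle E l → 0 ≤ pathWeight w l

section PathWeight

variable {V : Type*}

@[simp]
lemma pathWeight_nil (w : V → V → ℝ) : pathWeight w [] = 0 := rfl

@[simp]
lemma pathWeight_singleton (w : V → V → ℝ) (a : V) : pathWeight w [a] = 0 := rfl

@[simp]
lemma pathWeight_cons_cons (w : V → V → ℝ) (a b : V) (l : List V) :
    pathWeight w (a :: b :: l) = w a b + pathWeight w (b :: l) := by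
  simp [pathWeight]

lemma pathWeight_le_pathWeight {E : V → V → Prop} {w w' : V → V → ℝ}
    (h : ∀ a b, E a b → w a b ≤ w' a b) : ∀ {l : List V}, l.IsChain E →
      pathWeight w l ≤ pathWeight w' l
  | [], _ | [_], _ => le_rfl
  | a :: b :: l, hl => by
    rw [List.isChain_cons_cons] at hl
    simpa using add_le_add (h a b hl.1) (pathWeight_le_pathWeight h hl.2)

lemma pathWeight_neg {E : V → V → Prop} {w : V → V → ℝ} (h : ∀ a b, E a b → w a b < 0) :
    ∀ {l : List V}, l.IsChain E → 2 ≤ l.length → pathWeight w l < 0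
  | a :: b :: l, hl, _ => by
    rw [List.isChain_cons_cons] at hl
    have hrest : pathWeight w (b :: l) ≤ 0 := by
      cases l with
      | nil => simp
      | cons c l => exact (pathWeight_neg h hl.2 (by simp)).le
    simpa using add_neg_of_neg_of_nonpos (h a b hl.1) hrest

lemma pathWeight_sub (f : V → ℝ) :
    ∀ (a : V) (l : List V),
      pathWeight (fun x y => f y - f x) (a :: l) = f ((a :: l).getLast (by simp)) - f a
  | _, [] => by simp
  | a, b :: l => by
    rw [pathWeight_cons_cons, pathWeight_sub f b l, List.getLast_cons_cons]
    ring

end PathWeight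

section Cycles

variable {V : Type*} {E : V → V → Prop}

lemma IsCycle.mono {E' : V → V → Prop} (h : ∀ a b, E a b → E' a b) {l : List V}
    (hl : IsCycle E l) : IsCycle E' l :=
  ⟨hl.1, hl.2.1.imp h, hl.2.2⟩

lemma Consistent.of_potential {w : V → V → ℝ} (f : V → ℝ)
    (h : ∀ a b, E a b → f b - f a ≤ w a b) : Consistent E w := by
  rintro (_ | ⟨a, l⟩) ⟨hlen, hchain, hclosed⟩
  · simp at hlen
  · have hlast : (a :: l).getLast (by simp) = a := by
      simpa [List.getLast?_eq_some_getLast] using hclosed.symm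
    calc 0 = pathWeight (fun x y => f y - f x) (a :: l) := by
          rw [pathWeight_sub, hlast, sub_self]
      _ ≤ pathWeight w (a :: l) := pathWeight_le_pathWeight h hchain

lemma Consistent.not_isCycle_neg {w : V → V → ℝ} (hw : Consistent E w) :
    ¬∃ l, IsCycle (fun a b => E a b ∧ w a b < 0) l := by
  rintro ⟨l, hl⟩
  have hneg : pathWeight w l < 0 :=
    pathWeight_neg (fun _ _ h => h.2) hl.2.1 hl.1
  exact hneg.not_ge (hw l (hl.mono fun _ _ h => h.1))

lemma not_transGen_self_of_not_isCycle (h : ¬∃ l, IsCycle E l) (a : V) :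
    ¬Relation.TransGen E a a := by
  intro ha
  obtain ⟨b, hab, hba⟩ := Relation.TransGen.head'_iff.mp ha
  obtain ⟨l, hchain, hlast⟩ := List.exists_isChain_cons_of_relationReflTransGen hba
  refine h ⟨a :: b :: l, by simp, List.isChain_cons_cons.mpr ⟨hab, hchain⟩, ?_⟩
  rw [List.getLast?_cons_cons, List.getLast?_eq_some_getLast (List.cons_ne_nil _ _), hlast]
  rfl

lemma exists_nat_potential (hfin : ∀ a, {b | Relation.TransGen E a b}.Finite)
    (hirr : ∀ a, ¬Relation.TransGen E a a) :
    ∃ p : V → ℕ, ∀ a b, E a b → p b < p a := by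
  refine ⟨fun a => {b | Relation.TransGen E a b}.ncard, fun a b hab => ?_⟩
  refine Set.ncard_lt_ncard ⟨fun c hc => Relation.TransGen.head hab hc, fun hsub => ?_⟩ (hfin a)
  exact hirr b (hsub (Relation.TransGen.single hab))

end Cycles

section EdgeSets

variable {V : Type*}

lemma finite_transGen_of_subset_finset (E : Finset (V × V)) {r : V → V → Prop}
    (hr : ∀ a b, r a b → (a, b) ∈ E) (a : V) : {b | Relation.TransGen r a b}.Finite := by
  classical
  refine (E.image Prod.snd).finite_toSet.subset fun b hb => ?_
  obtain ⟨c, -, hcb⟩ := Relation.TransGen.tail'_iff.mp hb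
  exact Finset.mem_image.mpr ⟨(c, b), hr c b hcb, rfl⟩

/-- Edges outside `F` descend a potential `p`; an edge `(a, b) ∈ F` gets weight `p b + 1`,
which is positive and still at least `p b - p a`. -/
lemma exists_consistent_of_acyclic (E F : Finset (V × V))
    (hF : ¬∃ l, IsCycle (fun a b => (a, b) ∈ E ∧ (a, b) ∉ F) l) :
    ∃ w : V × V → ℝ, Consistent (fun a b => (a, b) ∈ E) (fun a b => w (a, b)) ∧
      (∀ e ∈ F, 0 < w e) ∧ ∀ e ∈ E, e ∉ F → w e < 0 := by
  classical
  obtain ⟨p, hp⟩ := exists_nat_potential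
    (finite_transGen_of_subset_finset E fun _ _ h => h.1) (not_transGen_self_of_not_isCycle hF)
  refine ⟨fun e => if e ∈ F then p e.2 + 1 else (p e.2 : ℝ) - p e.1,
    Consistent.of_potential (fun a => (p a : ℝ)) fun a b hab => ?_,
    fun e he => by simp only [he, if_true]; positivity,
    fun e he heF => ?_⟩
  · dsimp only
    split_ifs
    · linarith [(p a).cast_nonneg (α := ℝ)]
    · exact le_rfl
  · simpa [heF] using hp e.1 e.2 ⟨he, heF⟩

end EdgeSets

open Classical in
theorem stmt12_general {V : Type*}
    (E : Finset (V × V)) (k : ℕ) (hk : k ≤ E.card) :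
    (∃ w : V × V → ℝ,
        Consistent (fun a b => (a, b) ∈ E) (fun a b => w (a, b)) ∧
        (∀ e ∈ E, w e < 0 ∨ 0 < w e) ∧
        (E.filter (fun e => w e < 0)).card = E.card - k) ↔
      (∃ F ⊆ E, F.card = k ∧
        ¬∃ l, IsCycle (fun a b => (a, b) ∈ E ∧ (a, b) ∉ F) l) := by
  constructor
  · rintro ⟨w, hw, -, hcard⟩
    refine ⟨E.filter (fun e => ¬w e < 0), Finset.filter_subset _ _, ?_, ?_⟩
    · have := Finset.card_filter_add_card_filter_not (s := E) (fun e => w e < 0)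
      omega
    · rintro ⟨l, hl⟩
      exact hw.not_isCycle_neg ⟨l, hl.mono fun a b h => ⟨h.1, by simpa [h.1] using h.2⟩⟩
  · rintro ⟨F, hFE, rfl, hF⟩
    obtain ⟨w, hw, hpos, hneg⟩ := exists_consistent_of_acyclic E F hF
    have hnegF : E.filter (fun e => w e < 0) = E \ F := by
      ext e
      by_cases he : e ∈ F
      · simp [he, (hpos e he).not_gt]
      · simp only [Finset.mem_filter, Finset.mem_sdiff, he, not_false_eq_true, and_true]
        exact ⟨And.left, fun heE => ⟨heE, hneg e heE he⟩⟩
    refine ⟨w, hw, fun e he => ?_, by rw [hnegF, Finset.card_sdiff_of_subset hFE]⟩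
    by_cases heF : e ∈ F
    · exact Or.inr (hpos e heF)
    · exact Or.inl (hneg e he heF)

open Classical in
theorem stmt12 {V : Type*} [Fintype V] [DecidableEq V]
    (E : Finset (V × V)) (k : ℕ) (hk : k ≤ E.card) :
    (∃ w : V × V → ℝ,
        Consistent (fun a b => (a, b) ∈ E) (fun a b => w (a, b)) ∧
        (∀ e ∈ E, w e < 0 ∨ 0 < w e) ∧
        (E.filter (fun e => w e < 0)).card = E.card - k) ↔
      (∃ F ⊆ E, F.card = k ∧
        ¬∃ l, IsCycle (fun a b => (a, b) ∈ E ∧ (a, b) ∉ F) l) :=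
  stmt12_general E k hk
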